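/- arXiv:0912.0841 — 2 statements merged into one kernel-verified Lean document; each statement's English description precedes it below -/
import Mathlib

section
/- Let Ω ⊆ ℂⁿ be open, let φ : Ω → ℝ be a C² plurisubharmonic function, and let f ∈ C_c^∞(Ω). Then Σ_{l=1}^{2n} ∫_Ω |(∂_l φ)|² |f|² e^{−φ} dλ ≤ 4 ( ‖f‖²_φ + Σ_{m=1}^{2n} ∫_Ω |∂_m f − (∂_m φ) f|² e^{−φ} dλ ); in particular, for each l, ‖(∂_l φ) f‖²_φ is bounded by 4 times the weighted twisted Sobolev norm ‖f‖²_{1,φ,∇φ} = ‖f‖²_φ + Σ_m ‖∂_m f − (∂_m φ) f‖²_φ. -/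
open MeasureTheory Complex Metric Filter
noncomputable section

/-- `ℂⁿ` with its Euclidean inner product and norm. -/
abbrev Cn (n : ℕ) := EuclideanSpace ℂ (Fin n)

instance {n : ℕ} : MeasurableSpace (Cn n) := MeasurableSpace.comap WithLp.ofLp MeasurableSpace.pi

/-- Lebesgue measure on `ℂⁿ ≅ ℝ^{2n}`. -/
instance {n : ℕ} : MeasureSpace (Cn n) := ⟨(MeasureTheory.Measure.pi fun _ => volume).map (WithLp.toLp 2)⟩

/-- The real coordinate direction indexed by `(j, b)`: the `x_j`-direction if `b = false`,
the `y_j`-direction if `b = true`. -/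
def dir {n : ℕ} (l : Fin n × Bool) : Cn n :=
  EuclideanSpace.single l.1 (if l.2 then Complex.I else 1)

/-- The real partial derivative `∂_l`, `l` ranging over the `2n` real coordinate
directions of `ℂⁿ`. -/
def pd {n : ℕ} {F : Type} [NormedAddCommGroup F] [NormedSpace ℝ F]
    (l : Fin n × Bool) (f : Cn n → F) (z : Cn n) : F :=
  fderiv ℝ f z (dir l)

/-- The real Laplacian `Δφ = Σ_l ∂_l ∂_l φ`. -/
def lap {n : ℕ} (φ : Cn n → ℝ) (z : Cn n) : ℝ :=
  ∑ l : Fin n × Bool, pd l (pd l φ) z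

/-- `|∇φ|²`, the squared norm of the real gradient. -/
def gradSq {n : ℕ} (φ : Cn n → ℝ) (z : Cn n) : ℝ :=
  ∑ l : Fin n × Bool, (pd l φ z)^2

/-- The Levi form `L_u(z;t) = ¼(D²u(z)(t,t) + D²u(z)(it,it))`. -/
def levi {n : ℕ} (u : Cn n → ℝ) (z t : Cn n) : ℝ :=
  (1/4) * (fderiv ℝ (fun w => fderiv ℝ u w t) z t
    + fderiv ℝ (fun w => fderiv ℝ u w (Complex.I • t)) z (Complex.I • t))

/-- The Wirtinger derivative `∂g/∂z_j = ½(∂g/∂x_j − i ∂g/∂y_j)` of a complex-valued function. -/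
def wz {n : ℕ} (j : Fin n) (g : Cn n → ℂ) (z : Cn n) : ℂ :=
  (1/2) * (pd (j, false) g z - Complex.I * pd (j, true) g z)

/-- The Wirtinger derivative `∂g/∂z̄_j = ½(∂g/∂x_j + i ∂g/∂y_j)` of a complex-valued function. -/
def wzbar {n : ℕ} (j : Fin n) (g : Cn n → ℂ) (z : Cn n) : ℂ :=
  (1/2) * (pd (j, false) g z + Complex.I * pd (j, true) g z)

/-- The Wirtinger derivative `∂φ/∂z_j` of a real-valued function. -/
def wzR {n : ℕ} (j : Fin n) (φ : Cn n → ℝ) (z : Cn n) : ℂ :=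
  (1/2) * (Complex.ofReal (pd (j, false) φ z) - Complex.I * Complex.ofReal (pd (j, true) φ z))

/-- The Wirtinger derivative `∂φ/∂z̄_j` of a real-valued function. -/
def wzbarR {n : ℕ} (j : Fin n) (φ : Cn n → ℝ) (z : Cn n) : ℂ :=
  (1/2) * (Complex.ofReal (pd (j, false) φ z) + Complex.I * Complex.ofReal (pd (j, true) φ z))

/-- The complex Hessian coefficient `∂²φ/∂z_j∂z̄_k`. -/
def hess {n : ℕ} (φ : Cn n → ℝ) (j k : Fin n) (z : Cn n) : ℂ :=
  wz j (fun w => wzbarR k φ w) z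

/-- `∂̄*_φ f = −Σ_j (∂f_j/∂z_j − (∂φ/∂z_j) f_j)` for a `(0,1)`-form `f = (f_1,…,f_n)`. -/
def dbarStar {n : ℕ} (φ : Cn n → ℝ) (f : Fin n → Cn n → ℂ) (z : Cn n) : ℂ :=
  -∑ j, (wz j (f j) z - wzR j φ z * f j z)

/-- `f ∈ C_c^∞(Ω)`: smooth, compactly supported, with support inside `Ω`. -/
def SmoothCompSupp {n : ℕ} (Ω : Set (Cn n)) (f : Cn n → ℂ) : Prop :=
  ContDiff ℝ (⊤ : ℕ∞) f ∧ HasCompactSupport f ∧ tsupport f ⊆ Ω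

/-!
Integrate by parts in each real direction `v`: with `a = ∂_v φ` and `u = ∂_v f - a f`, the
identity `∂_v (|f|² e^{-φ}) = (2 ⟪f, u⟫ + a |f|²) e^{-φ}` gives
`∫ a² |f|² e^{-φ} = -∫ (∂_v a) |f|² e^{-φ} - 2 ∫ a ⟪f, u⟫ e^{-φ}`.
Summed over the `2n` directions, the first term is `-∫ Δφ |f|² e^{-φ} ≤ 0`, since `Δφ` is four
times the trace of the Levi form; the cross term is at most `½ ∫ a² |f|² e^{-φ} + 2 ∫ |u|² e^{-φ}`
by Cauchy–Schwarz. Absorbing the `½` yields `Σ ∫ a² |f|² e^{-φ} ≤ 4 Σ ∫ |u|² e^{-φ}`.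
All integrands vanish off `tsupport f ⊆ Ω`, so `φ` only has to be `C²` on
`Ω` and no cutoff of the weight is required.
-/

open scoped InnerProductSpace Topology

lemma HasCompactSupport.integrable_of_continuousOn_tsupport {X F : Type*} [TopologicalSpace X]
    [MeasurableSpace X] [OpensMeasurableSpace X] {μ : Measure X} [IsFiniteMeasureOnCompacts μ]
    [Zero F] {f : X → F} (hfc : HasCompactSupport f) {g : X → ℝ}
    (hg : ContinuousOn g (tsupport f)) (hg0 : ∀ z ∉ tsupport f, g z = 0) : Integrable g μ :=
  (integrableOn_iff_integrable_of_support_subset (Function.support_subset_iff'.2 hg0)).mp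
    (hg.integrableOn_compact' hfc (isClosed_tsupport f).measurableSet)

lemma neg_two_mul_inner_le {F : Type*} [NormedAddCommGroup F] [InnerProductSpace ℝ F]
    (a : ℝ) (x u : F) : -(2 * (a * ⟪x, u⟫_ℝ)) ≤ a ^ 2 * ‖x‖ ^ 2 / 2 + 2 * ‖u‖ ^ 2 := by
  have h := norm_add_sq_real (a • x) ((2 : ℝ) • u)
  rw [norm_smul, norm_smul, real_inner_smul_left, real_inner_smul_right, Real.norm_eq_abs,
    Real.norm_two, mul_pow, mul_pow, sq_abs] at h
  nlinarith [sq_nonneg ‖a • x + (2 : ℝ) • u‖]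

lemma norm_sq_mul_exp_neg_eventuallyEq_zero {X F : Type*} [TopologicalSpace X]
    [NormedAddCommGroup F] {f : X → F} (ψ : X → ℝ) {z : X} (hz : z ∉ tsupport f) :
    (fun w => ‖f w‖ ^ 2 * Real.exp (-ψ w)) =ᶠ[𝓝 z] 0 := by
  filter_upwards [notMem_tsupport_iff_eventuallyEq.mp hz] with w hw
  simp [hw]

section WeightedIntegrationByParts

variable {E F : Type*} [NormedAddCommGroup E] [NormedSpace ℝ E]
  [NormedAddCommGroup F] [InnerProductSpace ℝ F] {Ω : Set E} {ψ : E → ℝ} {f : E → F}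

lemma ContDiffOn.contDiffOn_fderiv_apply_of_isOpen {m n : WithTop ℕ∞} (hψ : ContDiffOn ℝ n ψ Ω)
    (hΩ : IsOpen Ω) (hmn : m + 1 ≤ n) (v : E) : ContDiffOn ℝ m (fun w => fderiv ℝ ψ w v) Ω :=
  (hψ.fderiv_of_isOpen hΩ hmn).clm_apply contDiffOn_const

lemma ContDiffOn.continuousOn_fderiv_apply_of_isOpen {n : WithTop ℕ∞} (hψ : ContDiffOn ℝ n ψ Ω)
    (hΩ : IsOpen Ω) (hn : 1 ≤ n) (v : E) : ContinuousOn (fun w => fderiv ℝ ψ w v) Ω :=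
  (hψ.continuousOn_fderiv_of_isOpen hΩ hn).clm_apply continuousOn_const

lemma differentiable_norm_sq_mul_exp_neg (hΩ : IsOpen Ω) (hψ : DifferentiableOn ℝ ψ Ω)
    (hf : Differentiable ℝ f) (hfΩ : tsupport f ⊆ Ω) :
    Differentiable ℝ fun w => ‖f w‖ ^ 2 * Real.exp (-ψ w) := by
  intro z
  by_cases hz : z ∈ tsupport f
  · have hψz := hψ.differentiableAt (hΩ.mem_nhds (hfΩ hz))
    exact ((hf z).norm_sq ℝ).mul (hψz.neg.exp)
  · exact (norm_sq_mul_exp_neg_eventuallyEq_zero ψ hz).differentiableAt_iff.mpr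
      (differentiableAt_const (0 : ℝ))

lemma fderiv_norm_sq_mul_exp_neg_apply (hΩ : IsOpen Ω) (hψ : DifferentiableOn ℝ ψ Ω)
    (hf : Differentiable ℝ f) (hfΩ : tsupport f ⊆ Ω) (z v : E) :
    fderiv ℝ (fun w => ‖f w‖ ^ 2 * Real.exp (-ψ w)) z v
      = (2 * ⟪f z, fderiv ℝ f z v - fderiv ℝ ψ z v • f z⟫_ℝ + fderiv ℝ ψ z v * ‖f z‖ ^ 2)
          * Real.exp (-ψ z) := by
  by_cases hz : z ∈ tsupport f
  · have hψz := (hψ.differentiableAt (hΩ.mem_nhds (hfΩ hz))).hasFDerivAt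
    have hρ : HasFDerivAt (fun w => ‖f w‖ ^ 2 * Real.exp (-ψ w)) _ z :=
      (hf z).hasFDerivAt.norm_sq.mul hψz.neg.exp
    rw [hρ.fderiv]
    simp only [add_apply, smul_apply, Pi.neg_apply,
      ContinuousLinearMap.comp_apply, neg_apply, innerSL_apply_apply,
      smul_eq_mul, nsmul_eq_mul, inner_sub_right, real_inner_smul_right,
      real_inner_self_eq_norm_sq]
    ring
  · rw [(norm_sq_mul_exp_neg_eventuallyEq_zero ψ hz).fderiv_eq]
    simp [image_eq_zero_of_notMem_tsupport hz]

variable [MeasurableSpace E] [BorelSpace E] {μ : Measure E}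

lemma neg_two_mul_integral_cross_term_le [IsFiniteMeasureOnCompacts μ] (hΩ : IsOpen Ω)
    (hψ : ContDiffOn ℝ 1 ψ Ω) (hf : ContDiff ℝ 1 f) (hfc : HasCompactSupport f)
    (hfΩ : tsupport f ⊆ Ω) (v : E) :
    -(2 * ∫ z, fderiv ℝ ψ z v * ⟪f z, fderiv ℝ f z v - fderiv ℝ ψ z v • f z⟫_ℝ
        * Real.exp (-ψ z) ∂μ)
      ≤ (∫ z, fderiv ℝ ψ z v ^ 2 * ‖f z‖ ^ 2 * Real.exp (-ψ z) ∂μ) / 2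
        + 2 * ∫ z, ‖fderiv ℝ f z v - fderiv ℝ ψ z v • f z‖ ^ 2 * Real.exp (-ψ z) ∂μ := by
  set a : E → ℝ := fun w => fderiv ℝ ψ w v
  set u : E → F := fun z => fderiv ℝ f z v - a z • f z
  have hac : ContinuousOn a Ω := hψ.continuousOn_fderiv_apply_of_isOpen hΩ le_rfl v
  have hψc : ContinuousOn ψ Ω := hψ.continuousOn
  have hfc' : Continuous f := hf.continuous
  have hDfc : Continuous fun z => fderiv ℝ f z v :=
    (hf.continuous_fderiv one_ne_zero).clm_apply continuous_const
  have hint : ∀ g : E → ℝ, ContinuousOn g Ω → (∀ z ∉ tsupport f, g z = 0) → Integrable g μ :=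
    fun g hg => hfc.integrable_of_continuousOn_tsupport (hg.mono hfΩ)
  have hA : Integrable (fun z => a z ^ 2 * ‖f z‖ ^ 2 * Real.exp (-ψ z)) μ :=
    hint _ (by fun_prop) fun z hz => by simp [image_eq_zero_of_notMem_tsupport hz]
  have hC : Integrable (fun z => a z * ⟪f z, u z⟫_ℝ * Real.exp (-ψ z)) μ :=
    hint _ (by fun_prop) fun z hz => by simp [image_eq_zero_of_notMem_tsupport hz]
  have hU : Integrable (fun z => ‖u z‖ ^ 2 * Real.exp (-ψ z)) μ :=
    hint _ (by fun_prop) fun z hz => by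
      simp [u, image_eq_zero_of_notMem_tsupport hz, fderiv_of_notMem_tsupport ℝ hz]
  calc -(2 * ∫ z, a z * ⟪f z, u z⟫_ℝ * Real.exp (-ψ z) ∂μ)
      = ∫ z, -(2 * (a z * ⟪f z, u z⟫_ℝ * Real.exp (-ψ z))) ∂μ := by
        rw [integral_neg, integral_const_mul]
    _ ≤ ∫ z, (a z ^ 2 * ‖f z‖ ^ 2 * Real.exp (-ψ z) / 2
          + 2 * (‖u z‖ ^ 2 * Real.exp (-ψ z))) ∂μ := by
        refine integral_mono (hC.const_mul 2).neg ((hA.div_const 2).add (hU.const_mul 2))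
          fun z => ?_
        have := mul_le_mul_of_nonneg_right (neg_two_mul_inner_le (a z) (f z) (u z))
          (Real.exp_pos (-ψ z)).le
        linarith
    _ = _ := by rw [integral_add (hA.div_const 2) (hU.const_mul 2), integral_div,
          integral_const_mul]

variable [FiniteDimensional ℝ E] [μ.IsAddHaarMeasure]

lemma integral_sq_fderiv_mul_norm_sq_mul_exp_neg_eq (hΩ : IsOpen Ω) (hψ : ContDiffOn ℝ 2 ψ Ω)
    (hf : ContDiff ℝ 1 f) (hfc : HasCompactSupport f) (hfΩ : tsupport f ⊆ Ω) (v : E) :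
    ∫ z, fderiv ℝ ψ z v ^ 2 * ‖f z‖ ^ 2 * Real.exp (-ψ z) ∂μ
      = -∫ z, fderiv ℝ (fun w => fderiv ℝ ψ w v) z v * (‖f z‖ ^ 2 * Real.exp (-ψ z)) ∂μ
        - 2 * ∫ z, fderiv ℝ ψ z v * ⟪f z, fderiv ℝ f z v - fderiv ℝ ψ z v • f z⟫_ℝ
            * Real.exp (-ψ z) ∂μ := by
  set a : E → ℝ := fun w => fderiv ℝ ψ w v
  have ha : ContDiffOn ℝ 1 a Ω := hψ.contDiffOn_fderiv_apply_of_isOpen hΩ (by norm_num) v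
  have hψ1 : DifferentiableOn ℝ ψ Ω := hψ.differentiableOn (by norm_num)
  have hf1 : Differentiable ℝ f := hf.differentiable one_ne_zero
  have hac : ContinuousOn a Ω := ha.continuousOn
  have ha'c : ContinuousOn (fun z => fderiv ℝ a z v) Ω :=
    ha.continuousOn_fderiv_apply_of_isOpen hΩ le_rfl v
  have hψc : ContinuousOn ψ Ω := hψ.continuousOn
  have hfc' : Continuous f := hf.continuous
  have hDfc : Continuous fun z => fderiv ℝ f z v :=
    (hf.continuous_fderiv one_ne_zero).clm_apply continuous_const
  have hint : ∀ g : E → ℝ, ContinuousOn g Ω → (∀ z ∉ tsupport f, g z = 0) → Integrable g μ :=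
    fun g hg => hfc.integrable_of_continuousOn_tsupport (hg.mono hfΩ)
  have hsplit : ∀ z, a z * fderiv ℝ (fun w => ‖f w‖ ^ 2 * Real.exp (-ψ w)) z v
      = 2 * (a z * ⟪f z, fderiv ℝ f z v - a z • f z⟫_ℝ * Real.exp (-ψ z))
        + a z ^ 2 * ‖f z‖ ^ 2 * Real.exp (-ψ z) := fun z => by
    rw [fderiv_norm_sq_mul_exp_neg_apply hΩ hψ1 hf1 hfΩ]
    ring
  have hA : Integrable (fun z => a z ^ 2 * ‖f z‖ ^ 2 * Real.exp (-ψ z)) μ :=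
    hint _ (by fun_prop) fun z hz => by simp [image_eq_zero_of_notMem_tsupport hz]
  have hC : Integrable (fun z => a z * ⟪f z, fderiv ℝ f z v - a z • f z⟫_ℝ
      * Real.exp (-ψ z)) μ :=
    hint _ (by fun_prop) fun z hz => by simp [image_eq_zero_of_notMem_tsupport hz]
  have hIBP := integral_mul_fderiv_eq_neg_fderiv_mul_of_integrable (μ := μ) (f := a)
    (g := fun w => ‖f w‖ ^ 2 * Real.exp (-ψ w)) (v := v)
    (hint _ (by fun_prop) fun z hz => by simp [image_eq_zero_of_notMem_tsupport hz])
    (by simp only [hsplit]; exact (hC.const_mul 2).add hA)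
    (hint _ (by fun_prop) fun z hz => by simp [image_eq_zero_of_notMem_tsupport hz])
    (fun z hz => (ha.differentiableOn one_ne_zero).differentiableAt (hΩ.mem_nhds ?_))
    (fun z _ => differentiable_norm_sq_mul_exp_neg hΩ hψ1 hf1 hfΩ z)
  · simp only [hsplit] at hIBP
    rw [integral_add (hC.const_mul 2) hA, integral_const_mul] at hIBP
    linarith
  · exact hfΩ (tsupport_comp_subset (g := fun x : F => ‖x‖ ^ 2) (by simp) f
      (tsupport_mul_subset_left hz))

theorem sum_integral_sq_fderiv_mul_norm_sq_mul_exp_neg_le {ι : Type*} [Fintype ι] (v : ι → E)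
    (hΩ : IsOpen Ω) (hψ : ContDiffOn ℝ 2 ψ Ω)
    (hΔψ : ∀ z ∈ Ω, 0 ≤ ∑ i, fderiv ℝ (fun w => fderiv ℝ ψ w (v i)) z (v i))
    (hf : ContDiff ℝ 1 f) (hfc : HasCompactSupport f) (hfΩ : tsupport f ⊆ Ω) :
    ∑ i, ∫ z, fderiv ℝ ψ z (v i) ^ 2 * ‖f z‖ ^ 2 * Real.exp (-ψ z) ∂μ
      ≤ 4 * ∑ i, ∫ z, ‖fderiv ℝ f z (v i) - fderiv ℝ ψ z (v i) • f z‖ ^ 2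
          * Real.exp (-ψ z) ∂μ := by
  set A := fun i => ∫ z, fderiv ℝ ψ z (v i) ^ 2 * ‖f z‖ ^ 2 * Real.exp (-ψ z) ∂μ
  set B := fun i => ∫ z, fderiv ℝ (fun w => fderiv ℝ ψ w (v i)) z (v i)
    * (‖f z‖ ^ 2 * Real.exp (-ψ z)) ∂μ
  set C := fun i => ∫ z, fderiv ℝ ψ z (v i)
    * ⟪f z, fderiv ℝ f z (v i) - fderiv ℝ ψ z (v i) • f z⟫_ℝ * Real.exp (-ψ z) ∂μ
  set U := fun i => ∫ z, ‖fderiv ℝ f z (v i) - fderiv ℝ ψ z (v i) • f z‖ ^ 2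
    * Real.exp (-ψ z) ∂μ
  have hB : 0 ≤ ∑ i, B i := by
    have hBint : ∀ i, Integrable (fun z => fderiv ℝ (fun w => fderiv ℝ ψ w (v i)) z (v i)
        * (‖f z‖ ^ 2 * Real.exp (-ψ z))) μ := fun i => by
      have ha'c := (hψ.contDiffOn_fderiv_apply_of_isOpen hΩ (m := 1) (by norm_num) (v i)
        ).continuousOn_fderiv_apply_of_isOpen hΩ le_rfl (v i)
      have hψc := hψ.continuousOn
      have hfc' := hf.continuous
      exact hfc.integrable_of_continuousOn_tsupport ((by fun_prop : ContinuousOn _ Ω).mono hfΩ)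
        fun z hz => by simp [image_eq_zero_of_notMem_tsupport hz]
    simp only [B]
    rw [← integral_finsetSum _ fun i _ => hBint i]
    refine integral_nonneg fun z => ?_
    rw [← Finset.sum_mul]
    by_cases hz : z ∈ Ω
    · exact mul_nonneg (hΔψ z hz) (by positivity)
    · simp [image_eq_zero_of_notMem_tsupport fun h => hz (hfΩ h)]
  have hC : ∀ i, -(2 * C i) ≤ A i / 2 + 2 * U i := fun i =>
    neg_two_mul_integral_cross_term_le hΩ (hψ.of_le one_le_two) hf hfc hfΩ (v i)
  have hA : ∀ i, A i = -B i - 2 * C i := fun i =>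
    integral_sq_fderiv_mul_norm_sq_mul_exp_neg_eq hΩ hψ hf hfc hfΩ (v i)
  have hsum : ∑ i, A i ≤ -∑ i, B i + (∑ i, A i) / 2 + 2 * ∑ i, U i := by
    calc ∑ i, A i ≤ ∑ i, (-B i + (A i / 2 + 2 * U i)) :=
          Finset.sum_le_sum fun i _ => by linarith [hA i, hC i]
      _ = -∑ i, B i + (∑ i, A i) / 2 + 2 * ∑ i, U i := by
          rw [Finset.sum_add_distrib, Finset.sum_add_distrib, Finset.sum_neg_distrib,
            Finset.sum_div, Finset.mul_sum]
          ring
  linarith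

end WeightedIntegrationByParts

section Cn

variable {n : ℕ}

instance : BorelSpace (Cn n) := inferInstanceAs (BorelSpace (PiLp 2 (fun _ : Fin n => ℂ)))

instance : Measure.IsAddHaarMeasure (volume : Measure (Cn n)) :=
  (PiLp.continuousLinearEquiv 2 ℝ (fun _ : Fin n => ℂ)).symm.isAddHaarMeasure_map
    (Measure.pi fun _ : Fin n => (volume : Measure ℂ))

lemma I_smul_dir_false (j : Fin n) : Complex.I • dir (j, false) = dir (j, true) := by
  ext k
  by_cases h : k = j <;> simp [dir, h]

lemma lap_eq_four_mul_sum_levi (φ : Cn n → ℝ) (z : Cn n) :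
    lap φ z = 4 * ∑ j, levi φ z (dir (j, false)) := by
  have hpd : ∀ l, pd l (pd l φ) z = fderiv ℝ (fun w => fderiv ℝ φ w (dir l)) z (dir l) :=
    fun _ => rfl
  rw [lap, Fintype.sum_prod_type, Finset.mul_sum]
  refine Finset.sum_congr rfl fun j _ => ?_
  rw [Fintype.sum_bool, hpd, hpd, levi, I_smul_dir_false]
  ring

lemma lap_nonneg_of_levi_nonneg {φ : Cn n → ℝ} {z : Cn n} (h : ∀ t, 0 ≤ levi φ z t) :
    0 ≤ lap φ z := by
  rw [lap_eq_four_mul_sum_levi]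
  exact mul_nonneg (by norm_num) (Finset.sum_nonneg fun j _ => h _)

end Cn

/-- `Σ_l ∫ |∂_l φ|² |f|² e^{−φ} ≤ 4(‖f‖²_φ + Σ_m ‖∂_m f − (∂_m φ)f‖²_φ)`, and in
particular each single term `‖(∂_l φ) f‖²_φ` is bounded by `4‖f‖²_{1,φ,∇φ}`. -/
theorem stmt2 {n : ℕ} (Ω : Set (Cn n)) (hΩ : IsOpen Ω)
    (φ : Cn n → ℝ) (hφ : ContDiffOn ℝ 2 φ Ω)
    (hpsh : ∀ z ∈ Ω, ∀ t : Cn n, 0 ≤ levi φ z t)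
    (f : Cn n → ℂ) (hf : SmoothCompSupp Ω f) :
    (∑ l : Fin n × Bool, ∫ z in Ω, (pd l φ z)^2 * ‖f z‖^2 * Real.exp (-φ z))
      ≤ 4 * ((∫ z in Ω, ‖f z‖^2 * Real.exp (-φ z))
          + ∑ m : Fin n × Bool,
              ∫ z in Ω, ‖pd m f z - Complex.ofReal (pd m φ z) * f z‖^2 * Real.exp (-φ z)) ∧
    ∀ l : Fin n × Bool,
      (∫ z in Ω, ‖Complex.ofReal (pd l φ z) * f z‖^2 * Real.exp (-φ z))
        ≤ 4 * ((∫ z in Ω, ‖f z‖^2 * Real.exp (-φ z))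
            + ∑ m : Fin n × Bool,
                ∫ z in Ω, ‖pd m f z - Complex.ofReal (pd m φ z) * f z‖^2 * Real.exp (-φ z)) := by
  obtain ⟨hfC, hfc, hfΩ⟩ := hf
  have hΩint : ∀ g : Cn n → ℝ, (∀ z ∉ tsupport f, g z = 0) → ∫ z in Ω, g z = ∫ z, g z :=
    fun g hg => setIntegral_eq_integral_of_forall_compl_eq_zero fun z hz =>
      hg z fun h => hz (hfΩ h)
  have hA : ∀ l, ∫ z in Ω, (pd l φ z)^2 * ‖f z‖^2 * Real.exp (-φ z)
      = ∫ z, fderiv ℝ φ z (dir l) ^ 2 * ‖f z‖ ^ 2 * Real.exp (-φ z) := fun l =>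
    hΩint _ fun z hz => by simp [image_eq_zero_of_notMem_tsupport hz]
  have hU : ∀ m, ∫ z in Ω, ‖pd m f z - Complex.ofReal (pd m φ z) * f z‖^2 * Real.exp (-φ z)
      = ∫ z, ‖fderiv ℝ f z (dir m) - fderiv ℝ φ z (dir m) • f z‖ ^ 2 * Real.exp (-φ z) :=
    fun m => by
      simp only [pd, ← Complex.real_smul]
      exact hΩint _ fun z hz => by
        simp [image_eq_zero_of_notMem_tsupport hz, fderiv_of_notMem_tsupport ℝ hz]
  have hsum : ∑ l : Fin n × Bool, ∫ z in Ω, (pd l φ z)^2 * ‖f z‖^2 * Real.exp (-φ z)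
      ≤ 4 * ∑ m : Fin n × Bool,
          ∫ z in Ω, ‖pd m f z - Complex.ofReal (pd m φ z) * f z‖^2 * Real.exp (-φ z) := by
    simp only [hA, hU]
    exact sum_integral_sq_fderiv_mul_norm_sq_mul_exp_neg_le dir hΩ hφ
      (fun z hz => lap_nonneg_of_levi_nonneg (hpsh z hz)) (hfC.of_le (by exact_mod_cast le_top))
      hfc hfΩ
  have hN : 0 ≤ ∫ z in Ω, ‖f z‖^2 * Real.exp (-φ z) := by positivity
  have hmain := hsum.trans (mul_le_mul_of_nonneg_left (le_add_of_nonneg_left hN) zero_le_four)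
  refine ⟨hmain, fun l => le_trans ?_ hmain⟩
  simp only [norm_mul, Complex.norm_real, Real.norm_eq_abs, mul_pow, sq_abs]
  exact Finset.single_le_sum (f := fun m => ∫ z in Ω, (pd m φ z)^2 * ‖f z‖^2 * Real.exp (-φ z))
    (fun m _ => by positivity) (Finset.mem_univ l)
end
end

section
/- Let Ω ⊆ ℂⁿ be open, let φ : Ω → ℝ be of class C², let ε > 0, and let f ∈ C_c^∞(Ω). Then ∫_Ω ( |∇φ|² + (1+ε) Δφ ) |f|² e^{−φ} dλ ≤ (2 + ε + 1/ε) Σ_{l=1}^{2n} ∫_Ω |∂_l f − (∂_l φ) f|² e^{−φ} dλ. -/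
open MeasureTheory Complex Metric Filter
noncomputable section

/-
For a real direction `v` put `a = ∂_v φ`. Since `f` has compact support in `Ω`, the function
`a |f|² e^{-φ}` is `C¹` on the whole space, so its `v`-derivative integrates to zero:
`∫ (∂_v a) |f|² e^{-φ} = ∫ (a² |f|² - 2a ⟪f, ∂_v f⟫) e^{-φ}`.
With `w = ∂_v f - a f` the integrand on the left-hand side thereby becomes
`(-ε a² |f|² - 2(1+ε) a ⟪f, w⟫) e^{-φ}`, and completing the square,
`0 ≤ ‖ε a f + (1+ε) w‖²`, bounds it by `(1+ε)²/ε · |w|² e^{-φ} = (2+ε+1/ε) |w|² e^{-φ}`.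
Summing over the `2n` coordinate directions gives the theorem.
-/

open Function RealInnerProductSpace

section
variable {𝕜 E G : Type*} [NontriviallyNormedField 𝕜] [NormedAddCommGroup E] [NormedSpace 𝕜 E]
  [NormedAddCommGroup G] [NormedSpace 𝕜 G]

theorem ContDiffOn.contDiff_of_tsupport_subset {n : WithTop ℕ∞} {h : E → G} {Ω : Set E}
    (hh : ContDiffOn 𝕜 n h Ω) (hΩ : IsOpen Ω) (hsupp : tsupport h ⊆ Ω) : ContDiff 𝕜 n h := by
  refine contDiff_iff_contDiffAt.2 fun z => ?_
  by_cases hz : z ∈ Ω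
  · exact hh.contDiffAt (hΩ.mem_nhds hz)
  · exact contDiffAt_const.congr_of_eventuallyEq
      (notMem_tsupport_iff_eventuallyEq.1 fun h' => hz (hsupp h'))

theorem ContDiffOn.fderiv_apply_of_isOpen {m n : WithTop ℕ∞} {φ : E → G} {Ω : Set E}
    (hφ : ContDiffOn 𝕜 n φ Ω) (hΩ : IsOpen Ω) (hmn : m + 1 ≤ n) (v : E) :
    ContDiffOn 𝕜 m (fun z => fderiv 𝕜 φ z v) Ω :=
  (hφ.fderiv_of_isOpen hΩ hmn).clm_apply contDiffOn_const

end

section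
variable {E F : Type*} [NormedAddCommGroup E] [NormedSpace ℝ E]
  [NormedAddCommGroup F] [InnerProductSpace ℝ F]

theorem sq_mul_norm_sq_add_le_norm_sub_smul_sq (x y : F) (a : ℝ) {ε : ℝ} (hε : 0 < ε) :
    a ^ 2 * ‖x‖ ^ 2 + (1 + ε) * (a ^ 2 * ‖x‖ ^ 2 - 2 * a * ⟪x, y⟫)
      ≤ (2 + ε + 1 / ε) * ‖y - a • x‖ ^ 2 := by
  set w := y - a • x
  have hy : y = w + a • x := by simp [w]
  have key : 0 ≤ ‖(ε * a) • x + (1 + ε) • w‖ ^ 2 := sq_nonneg _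
  rw [norm_add_sq_real, norm_smul, norm_smul, inner_smul_left, inner_smul_right] at key
  simp only [Real.norm_eq_abs, mul_pow, sq_abs, RCLike.conj_to_real] at key
  rw [hy, inner_add_right, inner_smul_right, real_inner_self_eq_norm_sq,
    show (2 + ε + 1 / ε) = (1 + ε) ^ 2 / ε by field_simp; ring, div_mul_eq_mul_div,
    le_div_iff₀ hε]
  nlinarith [key]

theorem fderiv_mul_norm_sq_mul_exp_neg_apply {a φ : E → ℝ} {f : E → F} {z : E}
    (ha : DifferentiableAt ℝ a z) (hφ : DifferentiableAt ℝ φ z)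
    (hf : DifferentiableAt ℝ f z) (v : E) :
    fderiv ℝ (fun w => a w * (‖f w‖ ^ 2 * Real.exp (-φ w))) z v
      = (fderiv ℝ a z v * ‖f z‖ ^ 2
          + a z * (2 * ⟪f z, fderiv ℝ f z v⟫ - fderiv ℝ φ z v * ‖f z‖ ^ 2))
        * Real.exp (-φ z) := by
  have h := ha.hasFDerivAt.fun_mul (hf.hasFDerivAt.norm_sq.fun_mul hφ.hasFDerivAt.fun_neg.exp)
  rw [h.fderiv]
  simp only [smul_neg, smul_add, add_apply, neg_apply, smul_apply, smul_eq_mul,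
    ContinuousLinearMap.comp_apply, coe_innerSL_apply, nsmul_eq_mul, Nat.cast_ofNat]
  ring

variable [MeasurableSpace E] [BorelSpace E] {μ : Measure E} [μ.IsAddHaarMeasure]
  {Ω : Set E} {φ : E → ℝ} {f : E → F}

theorem integrable_of_continuousOn_of_jet_eq_zero {G : Type*} [NormedAddCommGroup G]
    {g : E → G} (hg : ContinuousOn g Ω) (hfc : HasCompactSupport f)
    (hfΩ : tsupport f ⊆ Ω) (hgf : ∀ z, f z = 0 → fderiv ℝ f z = 0 → g z = 0) :
    Integrable g μ := by
  refine (integrableOn_iff_integrable_of_support_subset fun z hz => ?_).1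
    ((hg.mono hfΩ).integrableOn_compact hfc)
  by_contra hzf
  exact hz (hgf z (image_eq_zero_of_notMem_tsupport hzf)
    (image_eq_zero_of_notMem_tsupport fun h => hzf (tsupport_fderiv_subset ℝ h)))

theorem ContDiff.integrable_fderiv_apply {g : E → ℝ} (hg : ContDiff ℝ 1 g)
    (hgc : HasCompactSupport g) (v : E) : Integrable (fun z => fderiv ℝ g z v) μ :=
  ((hg.continuous_fderiv one_ne_zero).clm_apply continuous_const).integrable_of_hasCompactSupport
    (hgc.fderiv_apply (𝕜 := ℝ) v)

theorem integrable_sq_fderiv_add_mul_mul_exp_neg (hΩ : IsOpen Ω) (hφ : ContDiffOn ℝ 2 φ Ω)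
    (hf : Continuous f) (hfc : HasCompactSupport f) (hfΩ : tsupport f ⊆ Ω) (c : ℝ) (v : E) :
    Integrable (fun z => (fderiv ℝ φ z v ^ 2 + c * fderiv ℝ (fun w => fderiv ℝ φ w v) z v)
      * ‖f z‖ ^ 2 * Real.exp (-φ z)) μ := by
  refine integrable_of_continuousOn_of_jet_eq_zero ?_ hfc hfΩ (by simp_all)
  have ha : ContDiffOn ℝ 1 (fun z => fderiv ℝ φ z v) Ω :=
    hφ.fderiv_apply_of_isOpen hΩ (by norm_num) v
  have := (ha.fderiv_apply_of_isOpen (m := 0) hΩ (by simp) v).continuousOn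
  have := ha.continuousOn
  have := (hφ.of_le (by norm_num : (1 : WithTop ℕ∞) ≤ 2)).continuousOn
  fun_prop

variable [FiniteDimensional ℝ E]

theorem integral_fderiv_apply_eq_zero {g : E → ℝ} (hg : ContDiff ℝ 1 g)
    (hgc : HasCompactSupport g) (v : E) : ∫ z, fderiv ℝ g z v ∂μ = 0 := by
  simpa using integral_mul_fderiv_eq_neg_fderiv_mul_of_integrable (μ := μ)
    (f := fun _ => (1 : ℝ)) (g := g) (v := v) (by simp)
    (by simpa using hg.integrable_fderiv_apply hgc v)
    (by simpa using hg.continuous.integrable_of_hasCompactSupport hgc)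
    (fun z _ => differentiableAt_const 1) (fun z _ => hg.differentiable one_ne_zero z)

theorem integral_sq_fderiv_add_mul_mul_exp_neg_le (hΩ : IsOpen Ω) (hφ : ContDiffOn ℝ 2 φ Ω)
    (hf : ContDiff ℝ 1 f) (hfc : HasCompactSupport f) (hfΩ : tsupport f ⊆ Ω) {ε : ℝ}
    (hε : 0 < ε) (v : E) :
    ∫ z, (fderiv ℝ φ z v ^ 2 + (1 + ε) * fderiv ℝ (fun w => fderiv ℝ φ w v) z v)
        * ‖f z‖ ^ 2 * Real.exp (-φ z) ∂μ
      ≤ (2 + ε + 1 / ε) *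
        ∫ z, ‖fderiv ℝ f z v - fderiv ℝ φ z v • f z‖ ^ 2 * Real.exp (-φ z) ∂μ := by
  set a := fun z => fderiv ℝ φ z v
  set g := fun z => a z * (‖f z‖ ^ 2 * Real.exp (-φ z))
  have ha : ContDiffOn ℝ 1 a Ω := hφ.fderiv_apply_of_isOpen hΩ (by norm_num) v
  have hφ1 : ContDiffOn ℝ 1 φ Ω := hφ.of_le (by norm_num)
  have hg_supp : support g ⊆ support f := fun z hz hfz => hz (by simp [g, hfz])
  have hg : ContDiff ℝ 1 g :=
    (ha.mul (((contDiff_norm_sq ℝ).comp hf).contDiffOn.mul hφ1.neg.exp))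
      |>.contDiff_of_tsupport_subset hΩ ((closure_mono hg_supp).trans hfΩ)
  have hgc : HasCompactSupport g := hfc.mono hg_supp
  have hg' : ∀ z, fderiv ℝ g z v = (fderiv ℝ a z v * ‖f z‖ ^ 2
      + a z * (2 * ⟪f z, fderiv ℝ f z v⟫ - a z * ‖f z‖ ^ 2)) * Real.exp (-φ z) := by
    intro z
    by_cases hz : z ∈ Ω
    · have hzΩ := hΩ.mem_nhds hz
      exact fderiv_mul_norm_sq_mul_exp_neg_apply
        ((ha.differentiableOn one_ne_zero).differentiableAt hzΩ)
        ((hφ1.differentiableOn one_ne_zero).differentiableAt hzΩ)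
        (hf.differentiable one_ne_zero z) v
    · have hzf : z ∉ tsupport f := fun h => hz (hfΩ h)
      have hzg : z ∉ tsupport g := fun h => hzf (closure_mono hg_supp h)
      simp [image_eq_zero_of_notMem_tsupport hzf,
        image_eq_zero_of_notMem_tsupport (fun h => hzg (tsupport_fderiv_subset ℝ h)),
        image_eq_zero_of_notMem_tsupport (fun h => hzf (tsupport_fderiv_subset ℝ h))]
  set R := fun z => ‖fderiv ℝ f z v - a z • f z‖ ^ 2 * Real.exp (-φ z)
  have hL := integrable_sq_fderiv_add_mul_mul_exp_neg (μ := μ) hΩ hφ hf.continuous hfc hfΩ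
    (1 + ε) v
  have hR : Integrable R μ := by
    refine integrable_of_continuousOn_of_jet_eq_zero ?_ hfc hfΩ (by simp_all [R])
    have := ha.continuousOn
    have := hφ1.continuousOn
    have := hf.continuous
    have := hf.continuous_fderiv one_ne_zero
    fun_prop
  have hg'int : Integrable (fun z => fderiv ℝ g z v) μ := hg.integrable_fderiv_apply hgc v
  calc _ = ∫ z, ((a z ^ 2 + (1 + ε) * fderiv ℝ a z v) * ‖f z‖ ^ 2 * Real.exp (-φ z)
          - (1 + ε) * fderiv ℝ g z v) ∂μ := by
        rw [integral_sub hL (hg'int.const_mul _), integral_const_mul,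
          integral_fderiv_apply_eq_zero hg hgc, mul_zero, sub_zero]
    _ ≤ ∫ z, (2 + ε + 1 / ε) * R z ∂μ := by
        refine integral_mono (hL.sub (hg'int.const_mul _)) (hR.const_mul _) fun z => ?_
        have hpt := mul_le_mul_of_nonneg_right
          (sq_mul_norm_sq_add_le_norm_sub_smul_sq (f z) (fderiv ℝ f z v) (a z) hε)
          (Real.exp_pos (-φ z)).le
        simp only [hg', R]
        linarith
    _ = _ := integral_const_mul _ _

end

instance {n : ℕ} : BorelSpace (Cn n) := PiLp.borelSpace 2

instance {n : ℕ} : (volume : Measure (Cn n)).IsAddHaarMeasure :=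
  (PiLp.continuousLinearEquiv 2 ℝ (fun _ : Fin n => ℂ)).symm.isAddHaarMeasure_map _

/-- `∫ (|∇φ|² + (1+ε)Δφ)|f|² e^{−φ} ≤ (2+ε+1/ε) Σ_l ∫ |∂_l f − (∂_l φ)f|² e^{−φ}`. -/
theorem stmt3 {n : ℕ} (Ω : Set (Cn n)) (hΩ : IsOpen Ω)
    (φ : Cn n → ℝ) (hφ : ContDiffOn ℝ 2 φ Ω)
    (ε : ℝ) (hε : 0 < ε)
    (f : Cn n → ℂ) (hf : SmoothCompSupp Ω f) :
    (∫ z in Ω, (gradSq φ z + (1 + ε) * lap φ z) * ‖f z‖^2 * Real.exp (-φ z))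
      ≤ (2 + ε + 1/ε) * ∑ l : Fin n × Bool,
          ∫ z in Ω, ‖pd l f z - Complex.ofReal (pd l φ z) * f z‖^2 * Real.exp (-φ z) := by
  obtain ⟨hfs, hfc, hfΩ⟩ := hf
  have hf1 : ContDiff ℝ 1 f := hfs.of_le (by exact_mod_cast le_top)
  have hf0 : ∀ z ∉ Ω, f z = 0 := fun z hz =>
    image_eq_zero_of_notMem_tsupport fun h => hz (hfΩ h)
  have hdf0 : ∀ z ∉ Ω, fderiv ℝ f z = 0 := fun z hz =>
    image_eq_zero_of_notMem_tsupport fun h => hz (hfΩ (tsupport_fderiv_subset ℝ h))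
  rw [setIntegral_eq_integral_of_forall_compl_eq_zero fun z hz => by simp [hf0 z hz]]
  rw [Finset.sum_congr rfl fun l _ => setIntegral_eq_integral_of_forall_compl_eq_zero fun z hz => by
    simp [pd, hf0 z hz, hdf0 z hz]]
  have hL : ∀ l : Fin n × Bool, Integrable fun z =>
      (pd l φ z ^ 2 + (1 + ε) * pd l (pd l φ) z) * ‖f z‖ ^ 2 * Real.exp (-φ z) := fun l =>
    integrable_sq_fderiv_add_mul_mul_exp_neg hΩ hφ hf1.continuous hfc hfΩ (1 + ε) (dir l)
  calc _ = ∑ l : Fin n × Bool, ∫ z, (pd l φ z ^ 2 + (1 + ε) * pd l (pd l φ) z)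
        * ‖f z‖ ^ 2 * Real.exp (-φ z) := by
        rw [← integral_finsetSum _ fun l _ => hL l]
        simp only [gradSq, lap, Finset.mul_sum, ← Finset.sum_add_distrib, Finset.sum_mul]
    _ ≤ ∑ l : Fin n × Bool, (2 + ε + 1 / ε) *
          ∫ z, ‖pd l f z - Complex.ofReal (pd l φ z) * f z‖ ^ 2 * Real.exp (-φ z) :=
        Finset.sum_le_sum fun l _ => by
          simp only [← Complex.real_smul]
          exact integral_sq_fderiv_add_mul_mul_exp_neg_le hΩ hφ hf1 hfc hfΩ hε (dir l)
    _ = _ := (Finset.mul_sum _ _ _).symm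
end
end
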